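/- arXiv:0805.2064 — 2 statements merged into one kernel-verified Lean document; each statement's English description precedes it below -/
import Mathlib

section
/- Let k be an algebraically closed field, n a positive integer, and σ ∈ Equiv.Perm (Fin n) an n-cycle (a cycle whose support is all of Fin n). Let g and h be n×n matrices over k, both monomial with the same permutation σ and both of determinant 1. Then there exists a diagonal matrix d over k with det d = 1 such that d * g * d⁻¹ = h. -/
/-!
Conjugating `g` by `diagonal t` multiplies its entry at `(σ j, j)` by `t (σ j) / t j`, so we
need `t (σ j) = c j * t j` with `c j = h (σ j) j / g (σ j) j`. Because `σ` is a single cycle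
through every index, such a `t` can be built by walking around the cycle from a base point,
and it closes up precisely because `∏ c = 1`, which is `det g = det h` once both determinants
are written as `sign σ * ∏ j, g (σ j) j`. Finally `t` is rescaled by an `n`-th root of
`(∏ t)⁻¹`, available since `k` is algebraically closed, so that `det (diagonal t) = 1`.
-/

/-- A square matrix `g` is monomial with permutation `σ` if `g i j ≠ 0` exactly when
`i = σ j`. -/
def Matrix.IsMonomialWith {k : Type*} [Field k] {ι : Type*}
    (g : Matrix ι ι k) (σ : Equiv.Perm ι) : Prop :=
  ∀ i j, g i j ≠ 0 ↔ i = σ j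

open Finset Matrix

namespace Equiv.Perm

variable {ι : Type*} [Fintype ι] [DecidableEq ι] {σ : Perm ι}

theorem IsCycle.bijective_pow_apply_of_support_eq_univ (hσc : σ.IsCycle)
    (hσs : σ.support = univ) (x : ι) :
    Function.Bijective fun m : Fin (Fintype.card ι) => (σ ^ (m : ℕ)) x := by
  refine (Fintype.bijective_iff_injective_and_card _).2 ⟨fun a b hab => ?_, Fintype.card_fin _⟩
  have hx : σ x ≠ x := mem_support.1 (hσs ▸ mem_univ x)
  have hpow : σ ^ (a : ℕ) = σ ^ (b : ℕ) := hσc.pow_eq_pow_iff.2 ⟨x, hx, hab⟩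
  rw [pow_inj_mod, hσc.orderOf, hσs, card_univ, Nat.mod_eq_of_lt a.isLt,
    Nat.mod_eq_of_lt b.isLt] at hpow
  exact Fin.ext hpow

theorem IsCycle.prod_range_card_pow_apply {M : Type*} [CommMonoid M] (hσc : σ.IsCycle)
    (hσs : σ.support = univ) (c : ι → M) (x : ι) :
    ∏ l ∈ range (Fintype.card ι), c ((σ ^ l) x) = ∏ i, c i := by
  rw [← Fin.prod_univ_eq_prod_range (fun l => c ((σ ^ l) x)),
    ← (Equiv.ofBijective _ (hσc.bijective_pow_apply_of_support_eq_univ hσs x)).prod_comp c]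
  rfl

theorem IsCycle.exists_apply_eq_mul_of_prod_eq_one {M : Type*} [CommMonoid M]
    (hσc : σ.IsCycle) (hσs : σ.support = univ) {c : ι → M} (hc : ∏ i, c i = 1) :
    ∃ t : ι → M, ∀ j, t (σ j) = c j * t j := by
  obtain ⟨x, -, -⟩ := id hσc
  set f : ℕ → M := fun m => ∏ l ∈ range m, c ((σ ^ l) x) with hf
  have f_succ (m : ℕ) : f (m + 1) = c ((σ ^ m) x) * f m := prod_range_succ_comm _ m
  -- a full turn around the cycle contributes the factor `∏ i, c i = 1`
  have f_periodic : Function.Periodic f (orderOf σ) := fun m => by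
    have hshift (l : ℕ) : (σ ^ (m + l)) x = (σ ^ l) ((σ ^ m) x) := by
      rw [add_comm, pow_add, mul_apply]
    simp only [hf, prod_range_add, hshift, hσc.orderOf, hσs, card_univ,
      hσc.prod_range_card_pow_apply hσs, hc, mul_one]
  let E := Equiv.ofBijective _ (hσc.bijective_pow_apply_of_support_eq_univ hσs x)
  have f_orbit (m : ℕ) : f (E.symm ((σ ^ m) x)) = f m := by
    have hm : m % orderOf σ < Fintype.card ι := by
      rw [hσc.orderOf, hσs, card_univ]
      exact Nat.mod_lt _ (Fintype.card_pos_iff.2 ⟨x⟩)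
    have hE : E ⟨m % orderOf σ, hm⟩ = (σ ^ m) x := by
      simp only [E, Equiv.ofBijective_apply, pow_mod_orderOf]
    rw [← hE, E.symm_apply_apply, f_periodic.map_mod_nat]
  refine ⟨fun j => f (E.symm j), fun j => ?_⟩
  obtain ⟨m, rfl⟩ := E.surjective j
  simp only [E, Equiv.ofBijective_apply, ← mul_apply, ← pow_succ', f_orbit, f_succ]

theorem IsCycle.exists_apply_eq_mul_and_prod_eq_one {G : Type*} [CommGroup G]
    (hσc : σ.IsCycle) (hσs : σ.support = univ) (hroot : ∀ a : G, ∃ b, b ^ Fintype.card ι = a)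
    {c : ι → G} (hc : ∏ i, c i = 1) :
    ∃ t : ι → G, (∀ j, t (σ j) = c j * t j) ∧ ∏ i, t i = 1 := by
  obtain ⟨t, ht⟩ := hσc.exists_apply_eq_mul_of_prod_eq_one hσs hc
  obtain ⟨b, hb⟩ := hroot (∏ i, t i)⁻¹
  refine ⟨fun i => b * t i, fun j => by simp only [ht, mul_left_comm], ?_⟩
  rw [prod_mul_distrib, prod_const, card_univ, hb, inv_mul_cancel]

end Equiv.Perm

theorem IsAlgClosed.exists_units_pow_eq {k : Type*} [Field k] [IsAlgClosed k] (a : kˣ) {n : ℕ}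
    (hn : 0 < n) : ∃ b : kˣ, b ^ n = a := by
  obtain ⟨z, hz⟩ := IsAlgClosed.exists_pow_nat_eq (a : k) hn
  have hz0 : z ≠ 0 := by
    rintro rfl
    exact a.ne_zero (by rw [← hz, zero_pow hn.ne'])
  exact ⟨Units.mk0 z hz0, Units.ext (by simpa using hz)⟩

namespace Matrix.IsMonomialWith

variable {k ι : Type*} [Field k] {σ : Equiv.Perm ι} {g h : Matrix ι ι k}

theorem apply_ne_zero (hg : g.IsMonomialWith σ) (j : ι) : g (σ j) j ≠ 0 := (hg _ j).2 rfl

theorem apply_eq_zero (hg : g.IsMonomialWith σ) {i j : ι} (hij : i ≠ σ j) : g i j = 0 :=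
  not_not.1 (mt (hg i j).1 hij)

variable [Fintype ι] [DecidableEq ι]

theorem eq_permMatrix_mul_diagonal (hg : g.IsMonomialWith σ) :
    g = σ⁻¹.permMatrix k * diagonal fun j => g (σ j) j := by
  ext i j
  rw [mul_diagonal, Equiv.Perm.permMatrix, PEquiv.toMatrix_apply]
  by_cases hij : i = σ j
  · simp [hij]
  · rw [hg.apply_eq_zero hij, if_neg fun hji => hij ?_, zero_mul]
    rw [Equiv.toPEquiv_apply, Option.mem_some_iff, Equiv.Perm.inv_eq_iff_eq] at hji
    exact hji

theorem det_eq (hg : g.IsMonomialWith σ) :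
    g.det = Equiv.Perm.sign σ * ∏ j, g (σ j) j := by
  rw [congrArg det hg.eq_permMatrix_mul_diagonal, det_mul, det_permutation, det_diagonal,
    Equiv.Perm.sign_inv]

theorem prod_eq_of_det_eq (hg : g.IsMonomialWith σ) (hh : h.IsMonomialWith σ)
    (hdet : g.det = h.det) : ∏ j, g (σ j) j = ∏ j, h (σ j) j := by
  rw [hg.det_eq, hh.det_eq] at hdet
  refine mul_left_cancel₀ ?_ hdet
  rcases Int.units_eq_one_or (Equiv.Perm.sign σ) with hsign | hsign <;> simp [hsign]

theorem diagonal_mul_eq_mul_diagonal (hg : g.IsMonomialWith σ) (hh : h.IsMonomialWith σ)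
    {t : ι → k} (ht : ∀ j, t (σ j) * g (σ j) j = h (σ j) j * t j) :
    diagonal t * g = h * diagonal t := by
  ext i j
  rw [diagonal_mul, mul_diagonal]
  by_cases hij : i = σ j
  · rw [hij, ht]
  · rw [hg.apply_eq_zero hij, hh.apply_eq_zero hij, mul_zero, zero_mul]

end Matrix.IsMonomialWith

/-- Over an algebraically closed field, any two determinant-one monomial matrices with the
same underlying `n`-cycle permutation are conjugate by a diagonal matrix of determinant
one: any two representatives in `SL(n,k)` of a Coxeter element of the Weyl group are
conjugate by an element of the diagonal torus. -/
theorem monomial_coxeter_representatives_diag_conjugate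
    (k : Type*) [Field k] [IsAlgClosed k] (n : ℕ) (hn : 0 < n)
    (σ : Equiv.Perm (Fin n)) (hσc : σ.IsCycle) (hσs : σ.support = Finset.univ)
    (g h : Matrix (Fin n) (Fin n) k)
    (hg : g.IsMonomialWith σ) (hh : h.IsMonomialWith σ)
    (hgdet : g.det = 1) (hhdet : h.det = 1) :
    ∃ d : Matrix (Fin n) (Fin n) k, d.IsDiag ∧ d.det = 1 ∧ d * g * d⁻¹ = h := by
  let c : Fin n → kˣ := fun j =>
    Units.mk0 _ (hh.apply_ne_zero j) / Units.mk0 _ (hg.apply_ne_zero j)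
  have hc : ∏ j, c j = 1 := by
    ext
    simp [c, prod_div_distrib, hg.prod_eq_of_det_eq hh (hgdet.trans hhdet.symm),
      prod_ne_zero_iff.2 fun j _ => hh.apply_ne_zero j]
  obtain ⟨t, ht, htprod⟩ := hσc.exists_apply_eq_mul_and_prod_eq_one hσs
    (fun a => IsAlgClosed.exists_units_pow_eq a (by simpa using hn)) hc
  have hdet : (diagonal fun i => (t i : k)).det = 1 := by
    rw [det_diagonal, ← Units.coe_prod, htprod, Units.val_one]
  refine ⟨diagonal fun i => (t i : k), isDiag_diagonal _, hdet, ?_⟩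
  rw [hg.diagonal_mul_eq_mul_diagonal hh fun j => ?_,
    mul_nonsing_inv_cancel_right _ _ (hdet ▸ isUnit_one)]
  simp only [ht, c, Units.val_mul, Units.val_div_eq_div_val, Units.val_mk0]
  field_simp [hg.apply_ne_zero j]
end

section
/- Let k be an algebraically closed field, n a positive integer, and A an n×n integer matrix with A² = 1. Then every element t of the group (kˣ)^n can be written as a product t = u · v where u is fixed by φ_A (φ_A(u) = u) and v is inverted by φ_A (φ_A(v) = v⁻¹). -/
/-- The group endomorphism of the torus `(kˣ)^n` induced by an integer matrix `A` acting
on the cocharacter lattice: `(φ_A t) i = ∏ j, (t j)^(A i j)`. -/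
def torusEndo {k : Type*} [Field k] {n : ℕ} (A : Matrix (Fin n) (Fin n) ℤ)
    (t : Fin n → kˣ) : Fin n → kˣ :=
  fun i => ∏ j, (t j) ^ (A i j)

lemma prod_zpow_eq_zpow_sum {G : Type*} [CommGroup G] {ι : Type*} (s : Finset ι)
    (f : ι → ℤ) (a : G) : ∏ i ∈ s, a ^ f i = a ^ ∑ i ∈ s, f i :=
  Finset.cons_induction (by simp)
    (fun _ _ _ ih ↦ by simp [Finset.prod_cons, Finset.sum_cons, zpow_add, ih]) s

lemma torusEndo_mul {k : Type*} [Field k] {n : ℕ} (A : Matrix (Fin n) (Fin n) ℤ)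
    (u v : Fin n → kˣ) : torusEndo A (u * v) = torusEndo A u * torusEndo A v := by
  funext i
  simp [torusEndo, mul_zpow, Finset.prod_mul_distrib]

lemma torusEndo_comp {k : Type*} [Field k] {n : ℕ} (A B : Matrix (Fin n) (Fin n) ℤ)
    (t : Fin n → kˣ) : torusEndo A (torusEndo B t) = torusEndo (A * B) t := by
  funext i
  simp only [torusEndo, ← Finset.prod_zpow]
  rw [Finset.prod_comm]
  refine Finset.prod_congr rfl fun l _ => ?_
  simp only [← zpow_mul, prod_zpow_eq_zpow_sum, Matrix.mul_apply]
  congr 1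
  exact Finset.sum_congr rfl fun j _ => mul_comm _ _

lemma torusEndo_one {k : Type*} [Field k] {n : ℕ} (t : Fin n → kˣ) :
    torusEndo 1 t = t := by
  funext i
  simp [torusEndo, Matrix.one_apply, apply_ite (t · ^ ·)]

/-- If `A` is an `n×n` integer matrix with `A² = 1`, then every element of the torus
`(kˣ)^n` over an algebraically closed field `k` factors as `t = u * v` with `u` fixed by
`φ_A` and `v` inverted by `φ_A`: the decomposition `T = T₊ ⬝ T₋` for an involution. -/
theorem torus_involution_decomposition
    (k : Type*) [Field k] [IsAlgClosed k] (n : ℕ) (hn : 0 < n)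
    (A : Matrix (Fin n) (Fin n) ℤ) (hA : A ^ 2 = 1) :
    ∀ t : Fin n → kˣ, ∃ u v : Fin n → kˣ,
      torusEndo A u = u ∧ torusEndo A v = v⁻¹ ∧ t = u * v := by
  intro t
  -- choose a square root s of t
  have hsq : ∀ i : Fin n, ∃ x : kˣ, x ^ 2 = t i := by
    intro i
    obtain ⟨x, hx⟩ := IsAlgClosed.exists_pow_nat_eq ((t i : k)) (n := 2) (by norm_num)
    have hx0 : x ≠ 0 := by
      intro h; rw [h] at hx; simp at hx
      exact (t i).ne_zero hx.symm
    exact ⟨Units.mk0 x hx0, by ext; simpa using hx⟩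
  choose s hs using hsq
  have hss : (s : Fin n → kˣ) * s = t := by
    funext i; simpa [pow_two] using hs i
  refine ⟨s * torusEndo A s, s * (torusEndo A s)⁻¹, ?_, ?_, ?_⟩
  · rw [torusEndo_mul, torusEndo_comp, ← pow_two, hA, torusEndo_one, mul_comm]
  · have hinv : torusEndo A (torusEndo A s)⁻¹ = s⁻¹ := by
      have : torusEndo A ((torusEndo A s)⁻¹ * torusEndo A s) = 1 := by
        rw [inv_mul_cancel]
        funext i; simp [torusEndo]
      rw [torusEndo_mul, torusEndo_comp, ← pow_two, hA, torusEndo_one] at this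
      calc torusEndo A (torusEndo A s)⁻¹
          = torusEndo A (torusEndo A s)⁻¹ * s * s⁻¹ := by group
        _ = s⁻¹ := by rw [this, one_mul]
    rw [torusEndo_mul, hinv, mul_inv, inv_inv, mul_comm]
  · rw [← hss, mul_mul_mul_comm, mul_inv_cancel, mul_one]
end
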